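/- arXiv:1812.09936 — 4 statements merged into one kernel-verified Lean document; each statement's English description precedes it below -/
import Mathlib

section
/- Let f : ℙ¹(k) → ℙ¹(k) be a rational map of degree d ≥ 2 over an algebraically closed field k of characteristic 0, and suppose every fixed point of f is simple (i.e., has multiplier ≠ 1). Then the sum over all fixed points P of 1/(1 - λ(P)) equals 1, where λ(P) denotes the multiplier of f at P. -/
open Polynomial

/- The map `ℙ¹ → ℙ¹` (with `ℙ¹ = k ∪ {∞}` encoded as `Option k`, `none = ∞`)
induced by the rational function `f = p/q`. -/
open Classical in
noncomputable def rmFval {k : Type*} [Field k] (p q : Polynomial k) : Option k → Option k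
  | some a => if q.eval a = 0 then none else some (p.eval a / q.eval a)
  | none => if q.degree < p.degree then none
            else some (p.coeff q.natDegree / q.leadingCoeff)

/- The ramification index `e_f(P)` of the rational function `f = p/q` at the point
`P ∈ ℙ¹ = k ∪ {∞}`. -/
open Classical in
noncomputable def rmRam {k : Type*} [Field k] (p q : Polynomial k) : Option k → ℕ
  | some a =>
      if q.eval a = 0 then q.rootMultiplicity a
      else (p - C (p.eval a / q.eval a) * q).rootMultiplicity a
  | none =>
      if q.degree < p.degree then p.natDegree - q.natDegree
      else q.natDegree - (p - C (p.coeff q.natDegree / q.leadingCoeff) * q).natDegree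

/- The multiplier `λ_f(P)` of the rational function `f = p/q` at a (fixed) point
`P ∈ ℙ¹ = k ∪ {∞}` (junk value at points that are not fixed points). -/
open Classical in
noncomputable def rmMult {k : Type*} [Field k] (p q : Polynomial k) : Option k → k
  | some a =>
      if q.eval a = 0 then 0
      else ((derivative p).eval a * q.eval a - p.eval a * (derivative q).eval a) /
        (q.eval a) ^ 2
  | none =>
      if q.degree < p.degree then
        (if p.natDegree = q.natDegree + 1 then q.leadingCoeff / p.leadingCoeff else 0)
      else 0


/- Fixed point multiplier formula on `ℙ¹`: if every fixed point of a degree-`d ≥ 2`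
rational map `f = p/q` over an algebraically closed field of characteristic `0` is
simple (multiplier `≠ 1`), then `∑_{f(P)=P} 1/(1 - λ(P)) = 1`. -/

open Finset in
private lemma key_sum {k : Type*} [Field k] [DecidableEq k] (F g : Polynomial k) (hF : F ≠ 0)
    (hcard : F.roots.card = F.natDegree) (hnodup : F.roots.Nodup)
    (hg : g.degree < F.degree) :
    ∑ a ∈ F.roots.toFinset, g.eval a / (derivative F).eval a
      = g.coeff (F.natDegree - 1) / F.leadingCoeff := by
  set s := F.roots.toFinset with hs
  have hsval : s.val = F.roots := Multiset.Nodup.dedup hnodup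
  have hscard : #s = F.natDegree := by
    rw [Finset.card, hsval]; exact hcard
  have hprod : F = C F.leadingCoeff * ∏ b ∈ s, (X - C b) := by
    conv_lhs => rw [← C_leadingCoeff_mul_prod_multiset_X_sub_C hcard]
    congr 1
    rw [Finset.prod, hsval]
  have hlc : F.leadingCoeff ≠ 0 := leadingCoeff_ne_zero.mpr hF
  have hderiv : ∀ a ∈ s, (derivative F).eval a
      = F.leadingCoeff * ∏ b ∈ s.erase a, (a - b) := by
    intro a ha
    have h1 : F = C F.leadingCoeff * ((X - C a) * ∏ b ∈ s.erase a, (X - C b)) := by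
      rw [Finset.mul_prod_erase s (fun b => X - C b) ha]; exact hprod
    conv_lhs => rw [h1]
    rw [derivative_C_mul, eval_mul, eval_C, derivative_mul, derivative_sub,
      derivative_X, derivative_C, sub_zero, one_mul, eval_add, eval_mul, eval_sub,
      eval_X, eval_C, sub_self, zero_mul, add_zero, eval_prod]
    simp only [eval_sub, eval_X, eval_C]
  have hinj : Set.InjOn (id : k → k) ↑s := Function.injective_id.injOn
  have hglt : g.degree < (#s : WithBot ℕ) := by
    rw [hscard]; rwa [degree_eq_natDegree hF] at hg
  have hginterp := Lagrange.eq_interpolate (v := id) hinj hglt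
  have hcoeff : g.coeff (F.natDegree - 1)
      = ∑ a ∈ s, g.eval a * ∏ b ∈ s.erase a, (a - b)⁻¹ := by
    conv_lhs => rw [hginterp]
    rw [Lagrange.interpolate_apply, finset_sum_coeff]
    refine Finset.sum_congr rfl fun a ha => ?_
    have hb : (Lagrange.basis s id a).natDegree = #s - 1 := Lagrange.natDegree_basis hinj ha
    rw [coeff_C_mul]
    congr 1
    have : (Lagrange.basis s id a).coeff (F.natDegree - 1)
        = (Lagrange.basis s id a).leadingCoeff := by
      rw [leadingCoeff, hb, hscard]
    rw [this, Lagrange.basis, leadingCoeff_prod]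
    refine Finset.prod_congr rfl fun b hb' => ?_
    simp only [id]
    rw [Lagrange.basisDivisor, leadingCoeff_mul, leadingCoeff_C,
      (monic_X_sub_C b).leadingCoeff, mul_one]
  rw [hcoeff, Finset.sum_div]
  refine Finset.sum_congr rfl fun a ha => ?_
  rw [hderiv a ha, Finset.prod_inv_distrib, ← div_eq_mul_inv, div_div, mul_comm]

theorem stmt_0 {k : Type*} [Field k] [IsAlgClosed k] [CharZero k] (d : ℕ) (hd : 2 ≤ d)
    (p q : Polynomial k) (hq : q ≠ 0) (hco : IsCoprime p q)
    (hdeg : max p.natDegree q.natDegree = d)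
    (hsimple : ∀ P : Option k, rmFval p q P = P → rmMult p q P ≠ 1) :
    ∑ᶠ P ∈ {P : Option k | rmFval p q P = P}, (1 - rmMult p q P)⁻¹ = 1 := by
  classical
  have hp : p ≠ 0 := by
    rintro rfl
    have hu : IsUnit q := isCoprime_zero_left.mp hco
    have h0 : q.natDegree = 0 := natDegree_eq_zero_of_isUnit hu
    rw [natDegree_zero, h0] at hdeg
    omega
  have hplc : p.leadingCoeff ≠ 0 := leadingCoeff_ne_zero.mpr hp
  have hqlc : q.leadingCoeff ≠ 0 := leadingCoeff_ne_zero.mpr hq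
  set F : Polynomial k := X * q - p with hF
  have hFeval : ∀ a : k, F.eval a = a * q.eval a - p.eval a := by
    intro a; simp [hF]
  have hqa : ∀ a : k, F.eval a = 0 → q.eval a ≠ 0 := by
    intro a hFa hqa0
    have hpa : p.eval a = 0 := by
      have h := hFeval a
      rw [hFa, hqa0, mul_zero, zero_sub] at h
      exact neg_eq_zero.mp h.symm
    obtain ⟨u, v, huv⟩ := hco
    have h2 := congrArg (Polynomial.eval a) huv
    simp [hpa, hqa0] at h2
  have hpaq : ∀ a : k, F.eval a = 0 → p.eval a = a * q.eval a := by
    intro a hFa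
    have h := hFeval a
    rw [hFa] at h
    exact (sub_eq_zero.mp h.symm).symm
  have hfix : ∀ a : k, F.eval a = 0 → rmFval p q (some a) = some a := by
    intro a hFa
    have h1 := hqa a hFa
    simp only [rmFval, h1, if_false, if_neg h1]
    rw [hpaq a hFa]
    rw [mul_div_assoc, div_self h1, mul_one]
  have hFd : ∀ a : k, (derivative F).eval a
      = q.eval a + a * (derivative q).eval a - (derivative p).eval a := by
    intro a; simp [hF]
  have hmult : ∀ a : k, F.eval a = 0 →
      1 - rmMult p q (some a) = (derivative F).eval a / q.eval a := by
    intro a hFa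
    have h1 := hqa a hFa
    simp only [rmMult, if_neg h1]
    rw [hFd a, hpaq a hFa]
    field_simp
    ring
  have hFda : ∀ a : k, F.eval a = 0 → (derivative F).eval a ≠ 0 := by
    intro a hFa h0
    have h1 := hsimple _ (hfix a hFa)
    apply h1
    have h2 := hmult a hFa
    rw [h0, zero_div, sub_eq_zero] at h2
    exact h2.symm
  have hFne : F ≠ 0 := by
    intro h0
    have hpXq : p = X * q := by
      rw [hF] at h0
      exact (sub_eq_zero.mp h0).symm
    have hu : IsUnit q := hco.symm.isUnit_of_dvd ⟨X, hpXq.trans (mul_comm X q)⟩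
    have h1 : q.natDegree = 0 := natDegree_eq_zero_of_isUnit hu
    have h2 : p.natDegree = 1 := by
      rw [hpXq, natDegree_mul X_ne_zero hq, natDegree_X, h1]
    omega
  have hcard : Multiset.card F.roots = F.natDegree :=
    (splits_iff_card_roots).mp (IsAlgClosed.splits F)
  have hnodup : F.roots.Nodup := by
    rw [Multiset.nodup_iff_count_le_one]
    intro a
    rw [count_roots]
    by_contra hcount
    have h2 : 1 < F.rootMultiplicity a := by omega
    rw [one_lt_rootMultiplicity_iff_isRoot hFne] at h2
    exact hFda a h2.1 h2.2
  have hset : {P : Option k | rmFval p q P = P}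
      = ↑((F.roots.toFinset.image some) ∪ (if q.degree < p.degree then {none} else ∅)) := by
    ext P
    simp only [Set.mem_setOf_eq, Finset.coe_union, Set.mem_union, Finset.coe_image,
      Set.mem_image, Finset.mem_coe, Multiset.mem_toFinset]
    cases P with
    | none =>
      by_cases hlt : q.degree < p.degree <;>
        simp [rmFval, hlt]
    | some a =>
      constructor
      · intro hfp
        left
        refine ⟨a, ?_, rfl⟩
        rw [mem_roots hFne]
        by_cases hqa0 : q.eval a = 0
        · simp only [rmFval, if_pos hqa0] at hfp
          exact absurd hfp (by simp)
        · simp only [rmFval, if_neg hqa0] at hfp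
          have h1 : p.eval a / q.eval a = a := Option.some.inj hfp
          have h2 : p.eval a = a * q.eval a := (div_eq_iff hqa0).mp h1
          show F.eval a = 0
          rw [hFeval, h2, sub_self]
      · rintro (⟨b, hb, hba⟩ | hnone)
        · obtain rfl : b = a := Option.some.inj hba
          exact hfix b ((mem_roots hFne).mp hb)
        · split_ifs at hnone <;> simp at hnone
  rw [hset, finsum_mem_coe_finset]
  have hdisj : Disjoint (F.roots.toFinset.image some)
      (if q.degree < p.degree then ({none} : Finset (Option k)) else ∅) := by
    split_ifs <;> simp [Finset.disjoint_right]
  rw [Finset.sum_union hdisj, Finset.sum_image (fun a _ b _ h => Option.some.inj h)]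
  have hsum : q.degree < F.degree →
      ∑ a ∈ F.roots.toFinset, (1 - rmMult p q (some a))⁻¹
        = q.coeff (F.natDegree - 1) / F.leadingCoeff := by
    intro hglt
    rw [← key_sum F q hFne hcard hnodup hglt]
    refine Finset.sum_congr rfl fun a ha => ?_
    have hFa : F.eval a = 0 := by
      rw [Multiset.mem_toFinset, mem_roots hFne] at ha
      exact ha
    rw [hmult a hFa, inv_div]
  by_cases hlt : q.degree < p.degree
  · -- infinity is a fixed point
    have hpd : p.natDegree = d := by
      have h1 : q.natDegree ≤ p.natDegree := natDegree_le_natDegree hlt.le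
      omega
    have hqd : q.natDegree < d := by
      have h1 : q.natDegree < p.natDegree := natDegree_lt_natDegree hq hlt
      omega
    have hpdeg : p.degree = (d : ℕ) := by rw [degree_eq_natDegree hp, hpd]
    have hXq : (X * q).degree = ((q.natDegree + 1 : ℕ) : WithBot ℕ) := by
      rw [degree_mul, degree_X, degree_eq_natDegree hq, add_comm]
      norm_cast
    have hFdegle : F.degree ≤ (d : ℕ) := by
      refine le_trans (degree_sub_le _ _) (max_le ?_ ?_)
      · rw [hXq]
        exact_mod_cast (by omega : q.natDegree + 1 ≤ d)
      · rw [hpdeg]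
    have hcoeffd : F.coeff d = q.coeff (d - 1) - p.leadingCoeff := by
      rw [hF, coeff_sub]
      congr 1
      · have h1 : d = (d - 1) + 1 := by omega
        conv_lhs => rw [h1]
        rw [coeff_X_mul]
      · rw [← hpd, coeff_natDegree]
    have hfixinf : rmFval p q none = none := by simp [rmFval, hlt]
    have hmu := hsimple none hfixinf
    have hfinal : ∀ (hcne : q.coeff (d-1) - p.leadingCoeff ≠ 0),
        ∑ a ∈ F.roots.toFinset, (1 - rmMult p q (some a))⁻¹
          = q.coeff (d - 1) / (q.coeff (d-1) - p.leadingCoeff) := by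
      intro hcne
      have hFdegree : F.degree = (d:ℕ) :=
        le_antisymm hFdegle (le_degree_of_ne_zero (by rw [hcoeffd]; exact hcne))
      have hFnat : F.natDegree = d := natDegree_eq_of_degree_eq_some hFdegree
      have hFlc : F.leadingCoeff = q.coeff (d-1) - p.leadingCoeff := by
        rw [leadingCoeff, hFnat, hcoeffd]
      have hglt : q.degree < F.degree := by
        rw [hFdegree, ← hpdeg]
        exact hlt
      rw [hsum hglt, hFnat, hFlc]
    rw [if_pos hlt, Finset.sum_singleton]
    by_cases hcase : q.natDegree = d - 1
    · have hqc : q.coeff (d-1) = q.leadingCoeff := by rw [← hcase, coeff_natDegree]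
      have hmuval : rmMult p q none = q.leadingCoeff / p.leadingCoeff := by
        simp only [rmMult, if_pos hlt, if_pos (show p.natDegree = q.natDegree + 1 by omega)]
      have hne : p.leadingCoeff ≠ q.leadingCoeff := by
        intro h
        apply hmu
        rw [hmuval, ← h, div_self hplc]
      have hcne : q.coeff (d-1) - p.leadingCoeff ≠ 0 := by
        rw [hqc]
        intro h
        exact hne (sub_eq_zero.mp h).symm
      rw [hfinal hcne, hmuval, hqc]
      have h1 : 1 - q.leadingCoeff / p.leadingCoeff
          = (p.leadingCoeff - q.leadingCoeff) / p.leadingCoeff := by field_simp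
      have h2 : p.leadingCoeff - q.leadingCoeff ≠ 0 := sub_ne_zero.mpr hne
      have h3 : q.leadingCoeff - p.leadingCoeff ≠ 0 := by rw [hqc] at hcne; exact hcne
      rw [h1, inv_div]
      field_simp
      ring
    · have hqc0 : q.coeff (d-1) = 0 := coeff_eq_zero_of_natDegree_lt (by omega)
      have hcne : q.coeff (d-1) - p.leadingCoeff ≠ 0 := by
        rw [hqc0, zero_sub]
        exact neg_ne_zero.mpr hplc
      have hmu0 : rmMult p q none = 0 := by
        simp only [rmMult, if_pos hlt, if_neg (show ¬p.natDegree = q.natDegree + 1 by omega)]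
      rw [hfinal hcne, hqc0, hmu0, zero_div, sub_zero, inv_one, zero_add]
  · -- infinity is not fixed
    have hqd : q.natDegree = d := by
      have h1 : p.natDegree ≤ q.natDegree := natDegree_le_natDegree (le_of_not_gt hlt)
      omega
    have hqdeg : q.degree = (d : ℕ) := by rw [degree_eq_natDegree hq, hqd]
    have hXq : (X * q).degree = ((d + 1 : ℕ) : WithBot ℕ) := by
      rw [degree_mul, degree_X, hqdeg, add_comm]
      norm_cast
    have hplt : p.degree < (X * q).degree := by
      rw [hXq]
      calc p.degree ≤ q.degree := le_of_not_gt hlt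
        _ < _ := by
          rw [hqdeg]
          exact_mod_cast (by omega : d < d + 1)
    have hFdegree : F.degree = ((d + 1 : ℕ) : WithBot ℕ) := by
      rw [hF, degree_sub_eq_left_of_degree_lt hplt, hXq]
    have hFnat : F.natDegree = d + 1 := natDegree_eq_of_degree_eq_some hFdegree
    have hFlc : F.leadingCoeff = q.leadingCoeff := by
      rw [hF, leadingCoeff_sub_of_degree_lt hplt, leadingCoeff_mul, leadingCoeff_X, one_mul]
    have hglt : q.degree < F.degree := by
      rw [hqdeg, hFdegree]
      exact_mod_cast (by omega : d < d + 1)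
    rw [if_neg hlt, Finset.sum_empty, add_zero, hsum hglt, hFnat, hFlc,
      Nat.add_sub_cancel, ← hqd, coeff_natDegree, div_self hqlc]
end

section
/- Every complete critical point portrait of degree d contains a unique critically primitive subportrait (its 'frame'). -/
/-- `w` lies in the forward `Φ`-orbit of `v`, where `Φ` may only be iterated while
staying in the domain `V°`. -/
def OrbitMem {α : Type*} (Vo : Finset α) (Φ : α → α) (v w : α) : Prop :=
  ∃ n : ℕ, Φ^[n] v = w ∧ ∀ m < n, Φ^[m] v ∈ Vo

/-- `(Wo, W, Φ|_{Wo}, εW)` is a critically primitive (complete critical point) subportrait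
of degree `d` of the portrait `(Vo, V, Φ, ε)`. -/
def IsCritPrimSub {α : Type*} [DecidableEq α] (d : ℕ) (V Vo : Finset α) (Φ : α → α)
    (ε : α → ℕ) (W Wo : Finset α) (εW : α → ℕ) : Prop :=
  W ⊆ V ∧ Wo ⊆ Vo ∧ Wo ⊆ W ∧ (∀ w ∈ Wo, Φ w ∈ W) ∧
    (∀ w ∈ Wo, εW w ≤ ε w) ∧ (∀ w ∈ Wo, 2 ≤ εW w) ∧
    (∑ w ∈ Wo, (εW w - 1) = 2 * d - 2) ∧
    W = Wo ∪ Wo.image Φ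

/-- Every complete critical point portrait of degree `d` contains a unique critically
primitive subportrait (its frame): existence, and uniqueness of the data
`(W°, W, ε_W)` (the weight function being unique on `W°`). -/
theorem stmt_6 {α : Type*} [DecidableEq α] (d : ℕ) (V Vo : Finset α) (Φ : α → α) (ε : α → ℕ)
    (hsub : Vo ⊆ V) (hmap : ∀ v ∈ Vo, Φ v ∈ V) (hwt : ∀ v ∈ Vo, 1 ≤ ε v)
    (hsum : ∑ v ∈ Vo, (ε v - 1) = 2 * d - 2)
    (horb : ∀ w ∈ V, ∃ v ∈ Vo, 2 ≤ ε v ∧ OrbitMem Vo Φ v w) :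
    (∃ W Wo εW, IsCritPrimSub d V Vo Φ ε W Wo εW) ∧
      ∀ W₁ Wo₁ ε₁ W₂ Wo₂ ε₂, IsCritPrimSub d V Vo Φ ε W₁ Wo₁ ε₁ →
        IsCritPrimSub d V Vo Φ ε W₂ Wo₂ ε₂ →
        W₁ = W₂ ∧ Wo₁ = Wo₂ ∧ ∀ w ∈ Wo₁, ε₁ w = ε₂ w := by
  classical
  set S : Finset α := Vo.filter (fun v => 2 ≤ ε v) with hS
  have hSsum : ∑ v ∈ S, (ε v - 1) = 2 * d - 2 := by
    rw [← hsum]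
    apply Finset.sum_subset (Finset.filter_subset _ _)
    intro v hv hvn
    have h2 : ¬ 2 ≤ ε v := fun h => hvn (Finset.mem_filter.mpr ⟨hv, h⟩)
    have := hwt v hv
    omega
  -- key characterization
  have key : ∀ W Wo εW, IsCritPrimSub d V Vo Φ ε W Wo εW →
      Wo = S ∧ (∀ w ∈ Wo, εW w = ε w) := by
    rintro W Wo εW ⟨h1, h2, h3, h4, h5, h6, h7, h8⟩
    have hWoS : Wo ⊆ S := by
      intro w hw
      simp only [hS, Finset.mem_filter]
      exact ⟨h2 hw, le_trans (h6 w hw) (h5 w hw)⟩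
    have hle1 : ∑ w ∈ Wo, (εW w - 1) ≤ ∑ w ∈ Wo, (ε w - 1) :=
      Finset.sum_le_sum (fun w hw => by have := h5 w hw; omega)
    have hle2 : ∑ w ∈ Wo, (ε w - 1) ≤ ∑ w ∈ S, (ε w - 1) :=
      Finset.sum_le_sum_of_subset hWoS
    have heq1 : ∑ w ∈ Wo, (εW w - 1) = ∑ w ∈ Wo, (ε w - 1) := by omega
    have heq2 : ∑ w ∈ Wo, (ε w - 1) = ∑ w ∈ S, (ε w - 1) := by omega
    have hterm : ∀ w ∈ Wo, εW w - 1 = ε w - 1 :=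
      (Finset.sum_eq_sum_iff_of_le (fun w hw => by have := h5 w hw; omega)).mp heq1
    have hsd : ∑ w ∈ S \ Wo, (ε w - 1) = 0 := by
      have h := Finset.sum_sdiff (f := fun w => ε w - 1) hWoS
      beta_reduce at h
      omega
    have hSW : S ⊆ Wo := by
      intro w hw
      by_contra hwn
      have hmem : w ∈ S \ Wo := Finset.mem_sdiff.mpr ⟨hw, hwn⟩
      have hz := Finset.sum_eq_zero_iff.mp hsd w hmem
      simp only [hS, Finset.mem_filter] at hw
      omega
    refine ⟨Finset.Subset.antisymm hWoS hSW, fun w hw => ?_⟩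
    have := hterm w hw
    have := h6 w hw
    omega
  constructor
  · refine ⟨S ∪ S.image Φ, S, ε, ?_, ?_, ?_, ?_, ?_, ?_, hSsum, rfl⟩
    · intro w hw
      rcases Finset.mem_union.mp hw with hw | hw
      · exact hsub (Finset.mem_of_mem_filter _ hw)
      · rcases Finset.mem_image.mp hw with ⟨v, hv, rfl⟩
        exact hmap v (Finset.mem_of_mem_filter _ hv)
    · exact Finset.filter_subset _ _
    · exact Finset.subset_union_left
    · intro w hw
      exact Finset.mem_union_right _ (Finset.mem_image_of_mem _ hw)
    · intro w hw; exact le_refl _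
    · intro w hw; exact (Finset.mem_filter.mp hw).2
  · intro W₁ Wo₁ ε₁ W₂ Wo₂ ε₂ hp1 hp2
    obtain ⟨hw1, he1⟩ := key _ _ _ hp1
    obtain ⟨hw2, he2⟩ := key _ _ _ hp2
    have hwo : Wo₁ = Wo₂ := hw1.trans hw2.symm
    refine ⟨?_, hwo, fun w hw => (he1 w hw).trans (he2 w (hwo ▸ hw)).symm⟩
    rw [hp1.2.2.2.2.2.2.2, hp2.2.2.2.2.2.2.2, hwo]
end

section
/- Let M be a finitely generated module over a Noetherian local ring (O, M_P) with residue field k, and assume dim_k M is finite. Then for every integer ε ≥ 0, dim_k M ≥ dim_k(M / M_P^ε M) ≥ min{ε, dim_k M}. -/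
/-! The chain `M ⊇ 𝔪 M ⊇ 𝔪² M ⊇ ⋯` decreases strictly until it reaches `0`: by Nakayama,
`𝔪 N = N` forces `N = 0`, as `N` is finite-dimensional over `k` and hence finitely generated.
So each step drops the `k`-dimension by at least one until it is `0`, and `𝔪^ε M` has
codimension at least `min ε (dim_k M)`. -/

open Module

namespace Submodule

variable {k R M : Type*} [Field k] [CommRing R] [Algebra k R] [AddCommGroup M] [Module R M]
  [Module k M] [IsScalarTower k R M] [FiniteDimensional k M]

theorem finrank_restrictScalars_smul_lt {I : Ideal R} (hI : I ≤ (⊥ : Ideal R).jacobson) {N : Submodule R M}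
    (hN : N ≠ ⊥) : finrank k ((I • N).restrictScalars k) < finrank k (N.restrictScalars k) := by
  refine finrank_lt_finrank_of_lt (lt_of_le_of_ne smul_le_right fun h => hN ?_)
  exact eq_bot_of_le_smul_of_le_jacobson_bot I N
    (FG.of_restrictScalars k (IsNoetherian.noetherian _))
    (restrictScalars_injective k R M h).ge hI

theorem finrank_pow_smul_top_add_min_le {I : Ideal R} (hI : I ≤ (⊥ : Ideal R).jacobson) (n : ℕ) :
    finrank k ((I ^ n • ⊤ : Submodule R M).restrictScalars k) + min n (finrank k M) ≤
      finrank k M := by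
  induction n with
  | zero => simp [finrank_le]
  | succ n ih =>
    have hsucc : I ^ (n + 1) • (⊤ : Submodule R M) = I • I ^ n • ⊤ := by
      rw [pow_succ', ← smul_eq_mul, smul_assoc]
    rw [hsucc]
    by_cases hbot : I ^ n • (⊤ : Submodule R M) = ⊥
    · rw [hbot, smul_bot, restrictScalars_bot, finrank_bot]
      omega
    · have := finrank_restrictScalars_smul_lt (k := k) hI hbot
      omega

theorem min_le_finrank_quotient_pow_smul_top {I : Ideal R} (hI : I ≤ (⊥ : Ideal R).jacobson)
    (n : ℕ) :
    min n (finrank k M) ≤ finrank k (M ⧸ (I ^ n • ⊤ : Submodule R M).restrictScalars k) := by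
  have := finrank_quotient_add_finrank (R := k) ((I ^ n • ⊤ : Submodule R M).restrictScalars k)
  have := finrank_pow_smul_top_add_min_le (k := k) (M := M) hI n
  omega

end Submodule

theorem stmt_9_general (k O M : Type*) [Field k] [CommRing O] [IsLocalRing O]
    [Algebra k O]
    [AddCommGroup M] [Module O M] [Module k M] [IsScalarTower k O M]
    [FiniteDimensional k M] (ε : ℕ) :
    Module.finrank k M ≥
        Module.finrank k
          (M ⧸ (Submodule.restrictScalars k
            (IsLocalRing.maximalIdeal O ^ ε • (⊤ : Submodule O M)))) ∧
      Module.finrank k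
          (M ⧸ (Submodule.restrictScalars k
            (IsLocalRing.maximalIdeal O ^ ε • (⊤ : Submodule O M)))) ≥
        min ε (Module.finrank k M) :=
  ⟨Submodule.finrank_quotient_le _,
    Submodule.min_le_finrank_quotient_pow_smul_top
      (IsLocalRing.maximalIdeal_le_jacobson (R := O) ⊥) ε⟩

/-- Let `M` be a finitely generated module over a Noetherian local ring `O` with residue
field `k`, and assume `dim_k M` is finite. Then for every `ε ≥ 0`,
`dim_k M ≥ dim_k (M / m^ε M) ≥ min(ε, dim_k M)`. -/
theorem stmt_9 (k O M : Type*) [Field k] [CommRing O] [IsNoetherianRing O] [IsLocalRing O]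
    [Algebra k O]
    (hres : Function.Bijective (algebraMap k (IsLocalRing.ResidueField O)))
    [AddCommGroup M] [Module O M] [Module k M] [IsScalarTower k O M]
    [Module.Finite O M] [FiniteDimensional k M] (ε : ℕ) :
    Module.finrank k M ≥
        Module.finrank k
          (M ⧸ (Submodule.restrictScalars k
            (IsLocalRing.maximalIdeal O ^ ε • (⊤ : Submodule O M)))) ∧
      Module.finrank k
          (M ⧸ (Submodule.restrictScalars k
            (IsLocalRing.maximalIdeal O ^ ε • (⊤ : Submodule O M)))) ≥
        min ε (Module.finrank k M) :=
  stmt_9_general k O M ε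
end

section
/- Let a, b be elements of a field with -2a²(a+b)²(2a+b)² ≠ 0 and consider f(z) = (az³ + bz²)/((3a+2b)z - (2a+b)). Then 0, 1, and ∞ are fixed points of f, each of multiplicity (ramification index) at least 2, and the fourth fixed point of f is 2 + b/a with f'(2 + b/a) = 3/2 (in characteristic ≠ 3). -/
open Polynomial

open Polynomial

theorem stmt_16 {F : Type*} [Field F] (a b : F)
    (hres : -2 * a ^ 2 * (a + b) ^ 2 * (2 * a + b) ^ 2 ≠ 0) (h3 : (3 : F) ≠ 0) :
    (rmFval (C a * X ^ 3 + C b * X ^ 2) (C (3 * a + 2 * b) * X - C (2 * a + b))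
        (some 0) = some 0 ∧
      2 ≤ rmRam (C a * X ^ 3 + C b * X ^ 2) (C (3 * a + 2 * b) * X - C (2 * a + b))
        (some 0)) ∧
    (rmFval (C a * X ^ 3 + C b * X ^ 2) (C (3 * a + 2 * b) * X - C (2 * a + b))
        (some 1) = some 1 ∧
      2 ≤ rmRam (C a * X ^ 3 + C b * X ^ 2) (C (3 * a + 2 * b) * X - C (2 * a + b))
        (some 1)) ∧
    (rmFval (C a * X ^ 3 + C b * X ^ 2) (C (3 * a + 2 * b) * X - C (2 * a + b))
        none = none ∧
      2 ≤ rmRam (C a * X ^ 3 + C b * X ^ 2) (C (3 * a + 2 * b) * X - C (2 * a + b))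
        none) ∧
    (rmFval (C a * X ^ 3 + C b * X ^ 2) (C (3 * a + 2 * b) * X - C (2 * a + b))
        (some (2 + b / a)) = some (2 + b / a) ∧
      rmMult (C a * X ^ 3 + C b * X ^ 2) (C (3 * a + 2 * b) * X - C (2 * a + b))
        (some (2 + b / a)) = 3 / 2) := by
  have h2 : (2 : F) ≠ 0 := by intro h; apply hres; rw [show (-2 : F) = -(2 : F) by ring, h]; ring
  have ha : a ≠ 0 := by intro h; apply hres; rw [h]; ring
  have hab : a + b ≠ 0 := by intro h; apply hres; rw [h]; ring
  have h2ab : 2 * a + b ≠ 0 := by intro h; apply hres; rw [h]; ring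
  have hq0 : ((C (3 * a + 2 * b) * X - C (2 * a + b) : F[X])).eval 0 = -(2 * a + b) := by simp
  have hq1 : ((C (3 * a + 2 * b) * X - C (2 * a + b) : F[X])).eval 1 = a + b := by simp; ring
  have hqc : ((C (3 * a + 2 * b) * X - C (2 * a + b) : F[X])).eval (2 + b / a)
      = 2 * (a + b) * (2 * a + b) / a := by simp; field_simp; ring
  have hp0 : ((C a * X ^ 3 + C b * X ^ 2 : F[X])).eval 0 = 0 := by simp
  have hp1 : ((C a * X ^ 3 + C b * X ^ 2 : F[X])).eval 1 = a + b := by simp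
  have hpc : ((C a * X ^ 3 + C b * X ^ 2 : F[X])).eval (2 + b / a)
      = (2 + b / a) * (2 * (a + b) * (2 * a + b) / a) := by simp; field_simp; ring
  have hqc0 : (2 * (a + b) * (2 * a + b) / a) ≠ 0 :=
    div_ne_zero (mul_ne_zero (mul_ne_zero h2 hab) h2ab) ha
  have hpne : (C a * X ^ 3 + C b * X ^ 2 : F[X]) ≠ 0 := by
    intro h
    have := congrArg (fun q => q.coeff 3) h
    simp [coeff_add, coeff_C_mul] at this
    exact ha this
  have hpd : (C a * X ^ 3 + C b * X ^ 2 : F[X]).degree = 3 := by compute_degree!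
  have hpnd : (C a * X ^ 3 + C b * X ^ 2 : F[X]).natDegree = 3 := by compute_degree!
  have hqd : (C (3 * a + 2 * b) * X - C (2 * a + b) : F[X]).degree ≤ 1 := by compute_degree
  have hqnd : (C (3 * a + 2 * b) * X - C (2 * a + b) : F[X]).natDegree ≤ 1 := by compute_degree
  have hlt : (C (3 * a + 2 * b) * X - C (2 * a + b) : F[X]).degree
      < (C a * X ^ 3 + C b * X ^ 2 : F[X]).degree := by
    rw [hpd]; exact lt_of_le_of_lt hqd (by norm_num)
  refine ⟨⟨?_, ?_⟩, ⟨?_, ?_⟩, ⟨?_, ?_⟩, ⟨?_, ?_⟩⟩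
  · rw [rmFval, if_neg (by rw [hq0]; exact neg_ne_zero.mpr h2ab), hp0, zero_div]
  · rw [rmRam]
    rw [if_neg (by rw [hq0]; exact neg_ne_zero.mpr h2ab)]
    rw [hp0, hq0, zero_div, map_zero, zero_mul, sub_zero]
    rw [le_rootMultiplicity_iff hpne]
    exact ⟨C a * X + C b, by simp only [map_zero]; ring⟩
  · rw [rmFval, if_neg (by rw [hq1]; exact hab), hp1, hq1, div_self hab]
  · rw [rmRam]
    rw [if_neg (by rw [hq1]; exact hab)]
    rw [hp1, hq1, div_self hab, map_one, one_mul]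
    have hne : (C a * X ^ 3 + C b * X ^ 2 - (C (3 * a + 2 * b) * X - C (2 * a + b)) : F[X]) ≠ 0 := by
      intro h
      have := congrArg (fun q => q.coeff 3) h
      simp [coeff_sub, coeff_C_mul] at this
      exact ha this
    rw [le_rootMultiplicity_iff hne]
    exact ⟨C a * X + C (2 * a + b), by simp only [map_add, map_mul, map_ofNat, map_one]; ring⟩
  · rw [rmFval, if_pos hlt]
  · rw [rmRam, if_pos hlt, hpnd]
    omega
  · rw [rmFval, if_neg (by rw [hqc]; exact hqc0), hpc, hqc, mul_div_assoc,
      div_self hqc0, mul_one]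
  · rw [rmMult, if_neg (by rw [hqc]; exact hqc0)]
    have hdp : (derivative (C a * X ^ 3 + C b * X ^ 2 : F[X])).eval (2 + b / a)
        = 3 * a * (2 + b / a) ^ 2 + 2 * b * (2 + b / a) := by
      simp [derivative_add, derivative_C_mul]; ring
    have hdq : (derivative (C (3 * a + 2 * b) * X - C (2 * a + b) : F[X])).eval (2 + b / a)
        = 3 * a + 2 * b := by simp
    rw [hdp, hdq, hpc, hqc, div_eq_div_iff (pow_ne_zero 2 hqc0) h2]
    field_simp [ha]
    ring
end
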